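/- Let γ ∈ (0,1], A ≥ 1 and a > 0. Then there exist constants c ∈ (0,1) and C > 0 and a function σ : (0,1] → (0,∞) with σ(t) → 0 as t → 0+, all depending only on A, a and γ, with the following property. Let (w_n)_{n≥0} and (e_n)_{n≥0} be sequences of nonnegative real numbers with e_0 ≤ 1 such that w_{n+1} ≤ A e_n^{1+γ} for all n ≥ 0, and such that for each n ≥ 0 either (w_{n+1} ≤ w_n − a e_n² and e_{n+1} = A e_n) or (w_{n+1} ≤ w_n and e_{n+1} = e_n/2). Then Σ_{n≥0} e_n ≤ σ(e_0); moreover, if γ = 1 then Σ_{n≥N} e_n ≤ C (1−c)^N for every N ≥ 0, and if γ ∈ (0,1) then Σ_{n≥N} e_n ≤ C N^{−γ/(1−γ)} for every N ≥ 1. -/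

import Mathlib

open MeasureTheory Metric Set Filter Asymptotics
open scoped ENNReal NNReal Topology

noncomputable section

namespace TOP

abbrev E (d : ℕ) := EuclideanSpace ℝ (Fin d)

/-- The last coordinate `x_d` of a point `x ∈ ℝ^d`. -/
def lastCoord (d : ℕ) (x : E d) : ℝ :=
  if h : 0 < d then x ⟨d - 1, by omega⟩ else 0

/-- The unit vector in the `x_d` direction. -/
def eD (d : ℕ) : E d :=
  if h : 0 < d then EuclideanSpace.single (⟨d - 1, by omega⟩ : Fin d) (1 : ℝ) else 0

/-- Reflection across the hyperplane `{x_d = 0}`. -/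
def reflect (d : ℕ) (x : E d) : E d := x - (2 * lastCoord d x) • eD d

/-- A function even in the `x_d` variable. -/
def EvenXd (d : ℕ) (u : E d → ℝ) : Prop := ∀ x, u (reflect d x) = u x

/-- The Laplacian, as a sum of second directional derivatives. -/
def lap (d : ℕ) (f : E d → ℝ) (x : E d) : ℝ :=
  ∑ i : Fin d,
    fderiv ℝ (fun y => fderiv ℝ f y (EuclideanSpace.single i (1 : ℝ))) x
      (EuclideanSpace.single i (1 : ℝ))

/-- Smooth test functions compactly supported in `D`. -/
def IsTest (d : ℕ) (D : Set (E d)) (φ : E d → ℝ) : Prop :=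
  ContDiff ℝ (⊤ : ℕ∞) φ ∧ HasCompactSupport φ ∧ tsupport φ ⊆ D

/-- `Δu ≤ 0` on `D` in the sense of distributions. -/
def DistLapLE (d : ℕ) (D : Set (E d)) (u : E d → ℝ) : Prop :=
  ∀ φ : E d → ℝ, IsTest d D φ → (∀ x, 0 ≤ φ x) → (∫ x, u x * lap d φ x) ≤ 0

/-- `Δu = 0` on `D` in the sense of distributions. -/
def DistHarmOn (d : ℕ) (D : Set (E d)) (u : E d → ℝ) : Prop :=
  ∀ φ : E d → ℝ, IsTest d D φ → (∫ x, u x * lap d φ x) = 0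

/-- Solution of the thin obstacle problem in `D`: even in `x_d`, `C^{1,1/2}` up to the
hyperplane from above, nonnegative on the thin space, superharmonic, and harmonic off
the contact set. -/
def IsTOPSol (d : ℕ) (D : Set (E d)) (u : E d → ℝ) : Prop :=
  ContinuousOn u D ∧ EvenXd d u ∧
  (∃ (g : E d → E d →L[ℝ] ℝ) (C : ℝ≥0),
      (∀ x ∈ D ∩ {y | 0 ≤ lastCoord d y},
        HasFDerivWithinAt u (g x) (D ∩ {y | 0 ≤ lastCoord d y}) x) ∧
      HolderOnWith C (1 / 2) g (D ∩ {y | 0 ≤ lastCoord d y})) ∧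
  (∀ x ∈ D, lastCoord d x = 0 → 0 ≤ u x) ∧
  DistLapLE d D u ∧
  DistHarmOn d (D ∩ ({y | 0 < u y} ∪ {y | lastCoord d y ≠ 0})) u

/-- The Almgren frequency of `u` at `q` is `l`. -/
def HasFreq (d : ℕ) (u : E d → ℝ) (q : E d) (l : ℝ) : Prop :=
  Tendsto
    (fun r : ℝ =>
      (r * ∫ x in ball q r, ‖gradient u x‖ ^ 2) /
        ∫ x in sphere q r, u x ^ 2 ∂μH[(d : ℝ) - 1])
    (𝓝[>] 0) (𝓝 l)

/-- Contact points (in `B_1`) with frequency `l`. -/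
def Lam (d : ℕ) (u : E d → ℝ) (l : ℝ) : Set (E d) :=
  {q | q ∈ ball 0 1 ∧ u q = 0 ∧ lastCoord d q = 0 ∧ HasFreq d u q l}

/-- The `λ`-Weiss energy of `u` at radius `r`. -/
def Weiss (d : ℕ) (u : E d → ℝ) (l r : ℝ) : ℝ :=
  (∫ x in ball (0 : E d) r, ‖gradient u x‖ ^ 2) / r ^ ((d : ℝ) - 2 + 2 * l) -
    l * (∫ x in sphere (0 : E d) r, u x ^ 2 ∂μH[(d : ℝ) - 1]) / r ^ ((d : ℝ) - 1 + 2 * l)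

/-- Positively homogeneous of (integer) degree `m`. -/
def HomOfDeg (d : ℕ) (m : ℕ) (p : E d → ℝ) : Prop :=
  ∀ r : ℝ, 0 < r → ∀ x, p (r • x) = r ^ m * p x

/-- `P_{2k}` for even `m`: `m`-homogeneous harmonic polynomials even in `x_d`. -/
def MemPEven (d : ℕ) (m : ℕ) (p : E d → ℝ) : Prop :=
  ContDiff ℝ (⊤ : ℕ∞) p ∧ (∀ x, lap d p x = 0) ∧ HomOfDeg d m p ∧ EvenXd d p

/-- `P_{2k+1}` for odd `m`: `m`-homogeneous, even in `x_d`, vanishing on `{x_d = 0}`,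
harmonic in `{x_d ≠ 0}`. -/
def MemPOdd (d : ℕ) (m : ℕ) (p : E d → ℝ) : Prop :=
  Continuous p ∧ EvenXd d p ∧ (∀ x, lastCoord d x = 0 → p x = 0) ∧
  HomOfDeg d m p ∧ DistHarmOn d {y | lastCoord d y ≠ 0} p

/-- `P_m`, split by parity. -/
def MemP (d : ℕ) (m : ℕ) (p : E d → ℝ) : Prop :=
  if m % 2 = 0 then MemPEven d m p else MemPOdd d m p

/-- `P⁺_{2k}`: additionally `p ≥ 0` on the thin space. -/
def MemPPlusEven (d : ℕ) (m : ℕ) (p : E d → ℝ) : Prop :=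
  MemPEven d m p ∧ ∀ x, lastCoord d x = 0 → 0 ≤ p x

/-- `P⁺_{2k+1}`: additionally `Δp ≤ 0` distributionally on `ℝ^d`. -/
def MemPPlusOdd (d : ℕ) (m : ℕ) (p : E d → ℝ) : Prop :=
  MemPOdd d m p ∧ DistLapLE d univ p

/-- `P⁺_m`, split by parity. -/
def MemPPlus (d : ℕ) (m : ℕ) (p : E d → ℝ) : Prop :=
  if m % 2 = 0 then MemPPlusEven d m p else MemPPlusOdd d m p

/-- `L²(S^{d-1})` norm. -/
def sphL2 (d : ℕ) (p : E d → ℝ) : ℝ :=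
  Real.sqrt (∫ x in sphere (0 : E d) 1, p x ^ 2 ∂μH[(d : ℝ) - 1])

/-- `H¹(B_ρ)` norm. -/
def H1 (d : ℕ) (ρ : ℝ) (w : E d → ℝ) : ℝ :=
  Real.sqrt (∫ x in ball (0 : E d) ρ, (w x ^ 2 + ‖gradient w x‖ ^ 2))

/-- The boundary layer `L_η = {|x_d| < η |x|}`. -/
def Leta (d : ℕ) (η : ℝ) : Set (E d) := {x | |lastCoord d x| < η * ‖x‖}

/-- `S_η^+ ∪ S_η^-`. -/
def Seta (d : ℕ) (η : ℝ) : Set (E d) := {x | |lastCoord d x| = η * ‖x‖}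

/-- `S_η^+`. -/
def SetaPlus (d : ℕ) (η : ℝ) : Set (E d) := {x | lastCoord d x = η * ‖x‖}

/-- Locally Lipschitz away from the origin. -/
def LocLipAway (d : ℕ) (W : E d → ℝ) : Prop :=
  ∀ x : E d, x ≠ 0 → ∃ (K : ℝ≥0) (t : Set (E d)), t ∈ 𝓝 x ∧ LipschitzOnWith K W t

/-- For an `m`-homogeneous `W`, this is a positive multiple of the spherical energy
`∫_{S^{d-1}} |∇_S W|² - λ(m) W²`, expressed through the bulk Dirichlet integral:
`∫_S |∇_S W|² - λ(m) W² = (d+2m-2) ∫_{B_1} |∇W|² - (m² + m(m+d-2)) ∫_S W²`. -/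
def sphEnergy (d : ℕ) (m : ℕ) (W : E d → ℝ) : ℝ :=
  ((d : ℝ) + 2 * m - 2) * (∫ x in ball (0 : E d) 1, ‖gradient W x‖ ^ 2) -
    ((m : ℝ) ^ 2 + (m : ℝ) * ((m : ℝ) + (d : ℝ) - 2)) *
      ∫ x in sphere (0 : E d) 1, W x ^ 2 ∂μH[(d : ℝ) - 1]

/-- `η` is small enough that `Δ_{S^{d-1}} + λ(m)` is coercive (has negative first
Dirichlet eigenvalue) on the boundary layer `L_η ∩ S^{d-1}`. -/
def EtaAdmissible (d : ℕ) (m : ℕ) (η : ℝ) : Prop :=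
  0 < η ∧ η < 1 ∧
  ∀ W : E d → ℝ, HomOfDeg d m W → LocLipAway d W →
    (∀ x, x ∉ Leta d η → W x = 0) → (∃ x ∈ sphere (0 : E d) 1, W x ≠ 0) →
    0 < sphEnergy d m W

/-- Admissible competitors in the boundary-layer minimization defining the
replacement of `p`. -/
def Competitor (d : ℕ) (m : ℕ) (η : ℝ) (p W : E d → ℝ) : Prop :=
  HomOfDeg d m W ∧ EvenXd d W ∧ LocLipAway d W ∧
  (∀ x, lastCoord d x = 0 → 0 ≤ W x) ∧ ∀ x, x ∉ Leta d η → W x = p x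

/-- `pbar` is the replacement `p̄` of `p`: the energy minimizer among competitors. -/
def IsReplacement (d : ℕ) (m : ℕ) (η : ℝ) (p pbar : E d → ℝ) : Prop :=
  Competitor d m η p pbar ∧
  ∀ W, Competitor d m η p W → sphEnergy d m pbar ≤ sphEnergy d m W

/-- `Δp̄ = f dH^{d-1}|_{S_η^±} + g dH^{d-1}|_{x_d = 0}` as measures, with `f`
continuous away from the origin and `(m-1)`-homogeneous on the cone. -/
def LapDecomp (d : ℕ) (m : ℕ) (η : ℝ) (pbar f g : E d → ℝ) : Prop :=
  ContinuousOn f (Seta d η \ {0}) ∧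
  (∀ r : ℝ, 0 < r → ∀ x ∈ Seta d η, f (r • x) = r ^ ((m : ℝ) - 1) * f x) ∧
  ∀ φ : E d → ℝ, ContDiff ℝ (⊤ : ℕ∞) φ → HasCompactSupport φ →
    (∫ x, pbar x * lap d φ x) =
      (∫ x in Seta d η, f x * φ x ∂μH[(d : ℝ) - 1]) +
        ∫ x in {y : E d | lastCoord d y = 0}, g x * φ x ∂μH[(d : ℝ) - 1]

/-- Full replacement data for `p`: the replacement `p̄`, the densities `f, g` of
`Δp̄`, and `κ_p = ∫_{S_η^+ ∩ S^{d-1}} f dH^{d-2}`. -/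
def ReplacementData (d : ℕ) (m : ℕ) (η : ℝ) (p pbar f g : E d → ℝ) (κ : ℝ) : Prop :=
  IsReplacement d m η p pbar ∧ LapDecomp d m η pbar f g ∧
  κ = ∫ x in SetaPlus d η ∩ sphere (0 : E d) 1, f x ∂μH[(d : ℝ) - 2]

/-- `u ∈ S_m(p, ε, r)`, i.e. `δ(u_r, p) = max{‖u_r - p̄‖_{H¹(B_1)}, κ_p} < ε`. -/
def InS (d : ℕ) (m : ℕ) (u pbar : E d → ℝ) (κ ε r : ℝ) : Prop :=
  max (H1 d 1 fun x => u (r • x) / r ^ m - pbar x) κ < ε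

/-- `p` is the blow-up profile of `u` at `q` with frequency `m`. -/
def IsBlowUp (d : ℕ) (m : ℕ) (u : E d → ℝ) (q : E d) (p : E d → ℝ) : Prop :=
  MemPPlus d m p ∧ p ≠ 0 ∧
  (fun x => u (q + x) - p x) =o[𝓝 (0 : E d)] fun x => ‖x‖ ^ m

/-- The spine (translation-invariance set) of `p` inside `{x_d = 0}`. -/
def spine (d : ℕ) (p : E d → ℝ) : Set (E d) :=
  {ξ | lastCoord d ξ = 0 ∧ ∀ x, p (x + ξ) = p x}

/-- Dimension of the spine. -/
def spineDim (d : ℕ) (p : E d → ℝ) : ℕ :=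
  Module.finrank ℝ (Submodule.span ℝ (spine d p))

/-- The stratum `Λ_m^j(u)`. -/
def Stratum (d : ℕ) (m : ℕ) (u : E d → ℝ) (j : ℕ) : Set (E d) :=
  {q | q ∈ Lam d u (m : ℝ) ∧ ∃ p, IsBlowUp d m u q p ∧ spineDim d p = j}

/-!
For `n ≥ 1` the quantity `Φ n = e n + λ * w n ^ θ`, with `θ = γ / (1 + γ)`, is a Lyapunov
function: `Φ (n + 1) + e n / 2 ≤ Φ n`. In a halving step this is immediate. In a growth step
the energy drops by `a * e n ^ 2`, and concavity of `t ↦ t ^ θ` together with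
`w n ≤ 4 * A * e n ^ (1 + γ)` converts this into a drop of `w ^ θ` of order `e n`, enough to
pay for `e (n + 1) = A * e n` once `λ` is large. Telescoping bounds the tail `∑_{n ≥ N} e n`
by `2 * Φ N`. Since `e n ≤ Φ n ≤ Φ 1` is bounded, also `Φ n ≤ K * e n ^ γ`, hence
`Φ (n + 1) ≤ Φ n - μ * Φ n ^ (1 / γ)`. For `γ = 1` this is geometric decay; for `γ < 1`,
`Φ n ^ (-(1 - γ) / γ)` increases by a fixed amount at each step (convexity of `t ↦ t ^ (-p)`),
whence `Φ n = O(n ^ (-γ / (1 - γ)))`.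
-/

lemma rpow_le_tangent_of_le_one {θ x y : ℝ} (hθ₀ : 0 ≤ θ) (hθ₁ : θ ≤ 1) (hx : 0 < x)
    (hy : 0 ≤ y) : y ^ θ ≤ x ^ θ + θ * x ^ (θ - 1) * (y - x) := by
  have key := rpow_one_add_le_one_add_mul_self (s := y / x - 1)
    (by linarith [div_nonneg hy hx.le]) hθ₀ hθ₁
  rw [add_sub_cancel, Real.div_rpow hy hx.le, div_le_iff₀ (Real.rpow_pos_of_pos hx θ)] at key
  calc y ^ θ ≤ (1 + θ * (y / x - 1)) * x ^ θ := key
    _ = x ^ θ + θ * x ^ (θ - 1) * (y - x) := by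
      rw [Real.rpow_sub_one hx.ne']; field_simp

lemma tangent_le_rpow_of_nonpos {ρ x y : ℝ} (hρ : ρ ≤ 0) (hx : 0 < x) (hy : 0 < y) :
    x ^ ρ + ρ * x ^ (ρ - 1) * (y - x) ≤ y ^ ρ := by
  have hr : 0 < y / x := div_pos hy hx
  have key : 1 + ρ * (y / x - 1) ≤ (y / x) ^ ρ := by
    rw [Real.rpow_def_of_pos hr]
    nlinarith [Real.add_one_le_exp (Real.log (y / x) * ρ), Real.log_le_sub_one_of_pos hr]
  rw [Real.div_rpow hy.le hx.le, le_div_iff₀ (Real.rpow_pos_of_pos hx ρ)] at key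
  calc x ^ ρ + ρ * x ^ (ρ - 1) * (y - x) = (1 + ρ * (y / x - 1)) * x ^ ρ := by
        rw [Real.rpow_sub_one hx.ne']; field_simp
    _ ≤ y ^ ρ := key

lemma le_mul_rpow_of_le {x X γ : ℝ} (hx : 0 ≤ x) (hxX : x ≤ X) (hX : 1 ≤ X) (hγ : 0 ≤ γ)
    (hγ₁ : γ ≤ 1) : x ≤ X * x ^ γ := calc
  x = x ^ (1 - γ) * x ^ γ := by
      rw [← Real.rpow_add' hx (by norm_num), sub_add_cancel, Real.rpow_one]
  _ ≤ X ^ (1 - γ) * x ^ γ := by gcongr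
  _ ≤ X * x ^ γ := by
      gcongr
      simpa using Real.rpow_le_rpow_of_exponent_le hX (by linarith : 1 - γ ≤ 1)

lemma le_mul_rpow_neg_inv_of_le_sub_rpow {p μ D : ℝ} {x : ℕ → ℝ} (hp : 0 < p) (hD : 0 < D)
    (hDμ : D ^ (-p) ≤ p * μ) (hx : ∀ n, 0 ≤ x n) (hx₀ : x 0 ≤ D)
    (hstep : ∀ n, x (n + 1) ≤ x n - μ * x n ^ (1 + p)) (n : ℕ) :
    x n ≤ D * ((n : ℝ) + 1) ^ (-p⁻¹) := by
  have hμ : 0 < μ := pos_of_mul_pos_right ((Real.rpow_pos_of_pos hD _).trans_le hDμ) hp.le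
  have hpow : ∀ m : ℝ, 0 < m → (D * m ^ (-p⁻¹)) ^ (-p) = D ^ (-p) * m := fun m hm => by
    rw [Real.mul_rpow hD.le (Real.rpow_nonneg hm.le _), ← Real.rpow_mul hm.le, neg_mul_neg,
      inv_mul_cancel₀ hp.ne', Real.rpow_one]
  induction n with
  | zero => simpa using hx₀
  | succ n ih =>
    push_cast
    -- `0 ^ (-p) = 0`, so the vanishing case cannot go through the argument below.
    rcases (hx (n + 1)).eq_or_lt with hzero | hpos
    · rw [← hzero]; positivity
    have hdrop : μ * x n ^ (1 + p) ≤ x n - x (n + 1) := by linarith [hstep n]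
    have hxn : 0 < x n :=
      hpos.trans_le (by linarith [mul_nonneg hμ.le (Real.rpow_nonneg (hx n) (1 + p))])
    have hinc : x n ^ (-p) + p * μ ≤ x (n + 1) ^ (-p) := by
      have hcancel : x n ^ (-p - 1) * x n ^ (1 + p) = 1 := by
        rw [← Real.rpow_add hxn, show -p - 1 + (1 + p) = 0 by ring, Real.rpow_zero]
      calc x n ^ (-p) + p * μ = x n ^ (-p) + p * x n ^ (-p - 1) * (μ * x n ^ (1 + p)) := by
            rw [show p * x n ^ (-p - 1) * (μ * x n ^ (1 + p))
              = p * μ * (x n ^ (-p - 1) * x n ^ (1 + p)) by ring, hcancel, mul_one]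
        _ ≤ x n ^ (-p) + p * x n ^ (-p - 1) * (x n - x (n + 1)) := by gcongr
        _ = x n ^ (-p) + -p * x n ^ (-p - 1) * (x (n + 1) - x n) := by ring
        _ ≤ x (n + 1) ^ (-p) := tangent_le_rpow_of_nonpos (by linarith) hxn hpos
    have hlow : D ^ (-p) * ((n : ℝ) + 1) ≤ x n ^ (-p) := by
      rw [← hpow _ (by positivity)]
      exact Real.rpow_le_rpow_of_nonpos hxn ih (by linarith)
    have hfinal : (D * ((n : ℝ) + 1 + 1) ^ (-p⁻¹)) ^ (-p) ≤ x (n + 1) ^ (-p) := by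
      rw [hpow _ (by positivity)]; linarith
    by_contra hlt
    exact (Real.rpow_lt_rpow_of_neg (by positivity) (not_le.1 hlt) (by linarith)).not_ge hfinal


structure EnergyErrorScheme (γ A a : ℝ) (w e : ℕ → ℝ) : Prop where
  w_nonneg : ∀ n, 0 ≤ w n
  e_nonneg : ∀ n, 0 ≤ e n
  e_zero_le_one : e 0 ≤ 1
  w_succ_le : ∀ n, w (n + 1) ≤ A * e n ^ (1 + γ)
  step : ∀ n, (w (n + 1) ≤ w n - a * e n ^ 2 ∧ e (n + 1) = A * e n) ∨
    (w (n + 1) ≤ w n ∧ e (n + 1) = e n / 2)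

/-- `θ` is chosen so that `(e ^ (1 + γ)) ^ θ = e ^ γ`. -/
def lyapExp (γ : ℝ) : ℝ := γ / (1 + γ)

/-- A growth step lowers `w ^ θ` by at least `θ * a * e / (4 * A)`; this coefficient turns that
drop into `A * e`, the growth of the error. -/
def lyapCoeff (γ A a : ℝ) : ℝ := 4 * A ^ 2 / (lyapExp γ * a)

def lyapunov (γ A a : ℝ) (w e : ℕ → ℝ) (n : ℕ) : ℝ :=
  e n + lyapCoeff γ A a * w n ^ lyapExp γ

def errorBound (γ A a : ℝ) : ℝ := A + lyapCoeff γ A a * A ^ lyapExp γ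

def lyapunovConst (γ A a : ℝ) : ℝ :=
  errorBound γ A a + lyapCoeff γ A a * (4 * A) ^ lyapExp γ

def decayRate (γ A a : ℝ) : ℝ := (2 * lyapunovConst γ A a ^ γ⁻¹)⁻¹

def errorSumModulus (γ A a t : ℝ) : ℝ :=
  (1 + 2 * A) * t + 2 * lyapCoeff γ A a * A ^ lyapExp γ * t ^ γ

section Constants

variable {γ A a : ℝ}

lemma lyapExp_pos (hγ : 0 < γ) : 0 < lyapExp γ := by unfold lyapExp; positivity

lemma lyapExp_lt_one (hγ : 0 < γ) : lyapExp γ < 1 := by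
  unfold lyapExp; rw [div_lt_one (by linarith)]; linarith

lemma one_add_mul_lyapExp (hγ : 0 < γ) : (1 + γ) * lyapExp γ = γ := by
  unfold lyapExp; field_simp

lemma lyapCoeff_nonneg (hγ : 0 ≤ γ) (ha : 0 ≤ a) : 0 ≤ lyapCoeff γ A a :=
  div_nonneg (by positivity) (mul_nonneg (div_nonneg hγ (by linarith)) ha)

lemma one_le_errorBound (hγ : 0 ≤ γ) (hA : 1 ≤ A) (ha : 0 ≤ a) : 1 ≤ errorBound γ A a := by
  have := mul_nonneg (lyapCoeff_nonneg (A := A) hγ ha)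
    (Real.rpow_nonneg (by linarith : 0 ≤ A) (lyapExp γ))
  unfold errorBound; linarith

lemma one_le_lyapunovConst (hγ : 0 ≤ γ) (hA : 1 ≤ A) (ha : 0 ≤ a) :
    1 ≤ lyapunovConst γ A a := by
  have := mul_nonneg (lyapCoeff_nonneg (A := A) hγ ha)
    (Real.rpow_nonneg (by linarith : 0 ≤ 4 * A) (lyapExp γ))
  unfold lyapunovConst; linarith [one_le_errorBound hγ hA ha]

lemma decayRate_pos (hγ : 0 < γ) (hA : 1 ≤ A) (ha : 0 ≤ a) : 0 < decayRate γ A a := by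
  have := one_le_lyapunovConst hγ.le hA ha
  unfold decayRate; positivity

lemma decayRate_le_half (hγ : 0 < γ) (hA : 1 ≤ A) (ha : 0 ≤ a) :
    decayRate γ A a ≤ 1 / 2 := by
  have := Real.one_le_rpow (one_le_lyapunovConst hγ.le hA ha) (inv_nonneg.2 hγ.le)
  unfold decayRate
  rw [one_div]
  exact inv_anti₀ two_pos (by linarith)

lemma tendsto_errorSumModulus (hγ : 0 < γ) :
    Tendsto (errorSumModulus γ A a) (𝓝[>] 0) (𝓝 0) := by
  have hcont : Continuous (errorSumModulus γ A a) := by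
    unfold errorSumModulus
    fun_prop (disch := exact hγ.le)
  simpa [errorSumModulus, Real.zero_rpow hγ.ne'] using
    (hcont.tendsto 0).mono_left nhdsWithin_le_nhds

end Constants

lemma le_lyapCoeff_mul_rpow_sub_rpow {γ A a e w w' : ℝ} (hγ : 0 < γ) (hA : 1 ≤ A)
    (ha : 0 < a) (he : 0 < e) (hw' : 0 ≤ w') (hw : w ≤ 4 * A * e ^ (1 + γ))
    (hdrop : w' ≤ w - a * e ^ 2) :
    A * e ≤ lyapCoeff γ A a * (w ^ lyapExp γ - w' ^ lyapExp γ) := by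
  set θ := lyapExp γ with hθ_def
  have hθ : 0 < θ := lyapExp_pos hγ
  have hθ₁ : θ < 1 := lyapExp_lt_one hγ
  have hw₀ : 0 < w := by nlinarith [mul_pos ha (pow_pos he 2)]
  have hexp : (1 + γ) * (θ - 1) = -1 := by linear_combination one_add_mul_lyapExp hγ
  have hlow : (4 * A)⁻¹ * e⁻¹ ≤ w ^ (θ - 1) := calc
    (4 * A)⁻¹ * e⁻¹ ≤ (4 * A) ^ (θ - 1) * e⁻¹ := by
        gcongr
        rw [← Real.rpow_neg_one]
        exact Real.rpow_le_rpow_of_exponent_le (by linarith) (by linarith)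
    _ = (4 * A * e ^ (1 + γ)) ^ (θ - 1) := by
        rw [Real.mul_rpow (x := 4 * A) (by positivity) (by positivity), ← Real.rpow_mul he.le,
          hexp, Real.rpow_neg_one]
    _ ≤ w ^ (θ - 1) := Real.rpow_le_rpow_of_nonpos hw₀ hw (by linarith)
  have hdrop' : θ * (a * e ^ 2) * ((4 * A)⁻¹ * e⁻¹) ≤ θ * (w - w') * w ^ (θ - 1) :=
    mul_le_mul (by gcongr; linarith) hlow (by positivity)
      (mul_nonneg hθ.le (by linarith [mul_pos ha (pow_pos he 2)]))
  have htangent := rpow_le_tangent_of_le_one hθ.le hθ₁.le hw₀ hw'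
  have hL : 0 ≤ lyapCoeff γ A a := lyapCoeff_nonneg hγ.le ha.le
  calc A * e = lyapCoeff γ A a * (θ * (a * e ^ 2) * ((4 * A)⁻¹ * e⁻¹)) := by
        simp only [lyapCoeff, ← hθ_def]; field_simp
    _ ≤ lyapCoeff γ A a * (θ * (w - w') * w ^ (θ - 1)) := by gcongr
    _ ≤ lyapCoeff γ A a * (w ^ θ - w' ^ θ) := mul_le_mul_of_nonneg_left (by linarith) hL

namespace EnergyErrorScheme

variable {γ A a : ℝ} {w e : ℕ → ℝ}

lemma antitone_w (h : EnergyErrorScheme γ A a w e) (ha : 0 ≤ a) : Antitone w :=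
  antitone_nat_of_succ_le fun n => by
    rcases h.step n with ⟨hw, -⟩ | ⟨hw, -⟩
    · nlinarith [sq_nonneg (e n)]
    · exact hw

lemma e_le_two_mul_e_succ (h : EnergyErrorScheme γ A a w e) (hA : 1 ≤ A) (n : ℕ) :
    e n ≤ 2 * e (n + 1) := by
  rcases h.step n with ⟨-, he⟩ | ⟨-, he⟩ <;> rw [he] <;> nlinarith [h.e_nonneg n]

lemma w_le (h : EnergyErrorScheme γ A a w e) (hγ : 0 ≤ γ) (hγ₁ : γ ≤ 1) (hA : 1 ≤ A)
    {n : ℕ} (hn : 1 ≤ n) : w n ≤ 4 * A * e n ^ (1 + γ) := by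
  obtain ⟨m, rfl⟩ : ∃ m, n = m + 1 := ⟨n - 1, by omega⟩
  have htwo : (2 : ℝ) ^ (1 + γ) ≤ 4 := calc
    (2 : ℝ) ^ (1 + γ) ≤ 2 ^ (2 : ℝ) :=
        Real.rpow_le_rpow_of_exponent_le one_le_two (by linarith)
    _ = 4 := by norm_num
  calc w (m + 1) ≤ A * e m ^ (1 + γ) := h.w_succ_le m
    _ ≤ A * (2 * e (m + 1)) ^ (1 + γ) := by
        gcongr
        exacts [h.e_nonneg m, h.e_le_two_mul_e_succ hA m]
    _ = A * 2 ^ (1 + γ) * e (m + 1) ^ (1 + γ) := by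
        rw [Real.mul_rpow zero_le_two (h.e_nonneg _)]; ring
    _ ≤ 4 * A * e (m + 1) ^ (1 + γ) := by
        have hAE : 0 ≤ A * e (m + 1) ^ (1 + γ) :=
          mul_nonneg (by linarith) (Real.rpow_nonneg (h.e_nonneg _) _)
        nlinarith [mul_le_mul_of_nonneg_right htwo hAE]

lemma lyapunov_nonneg (h : EnergyErrorScheme γ A a w e) (hγ : 0 ≤ γ) (ha : 0 ≤ a) (n : ℕ) :
    0 ≤ lyapunov γ A a w e n :=
  add_nonneg (h.e_nonneg n)
    (mul_nonneg (lyapCoeff_nonneg hγ ha) (Real.rpow_nonneg (h.w_nonneg n) _))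

lemma lyapunov_succ_add_half_le (h : EnergyErrorScheme γ A a w e) (hγ : 0 < γ)
    (hγ₁ : γ ≤ 1) (hA : 1 ≤ A) (ha : 0 < a) {n : ℕ} (hn : 1 ≤ n) :
    lyapunov γ A a w e (n + 1) + e n / 2 ≤ lyapunov γ A a w e n := by
  have hL : 0 ≤ lyapCoeff γ A a := lyapCoeff_nonneg hγ.le ha.le
  have hmono : w (n + 1) ^ lyapExp γ ≤ w n ^ lyapExp γ :=
    Real.rpow_le_rpow (h.w_nonneg _) (h.antitone_w ha.le n.le_succ) (lyapExp_pos hγ).le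
  have hmono' := mul_le_mul_of_nonneg_left hmono hL
  unfold lyapunov
  rcases h.step n with ⟨hw, he⟩ | ⟨-, he⟩
  · rw [he]
    rcases (h.e_nonneg n).eq_or_lt with hzero | hpos
    · rw [← hzero]; linarith
    · have hpay := le_lyapCoeff_mul_rpow_sub_rpow hγ hA ha hpos (h.w_nonneg _)
        (h.w_le hγ.le hγ₁ hA hn) hw
      rw [mul_sub] at hpay
      linarith
  · rw [he]; linarith

lemma sum_range_add_two_mul_lyapunov_le (h : EnergyErrorScheme γ A a w e) (hγ : 0 < γ)
    (hγ₁ : γ ≤ 1) (hA : 1 ≤ A) (ha : 0 < a) {N : ℕ} (hN : 1 ≤ N) (M : ℕ) :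
    ∑ i ∈ Finset.range M, e (N + i) + 2 * lyapunov γ A a w e (N + M) ≤
      2 * lyapunov γ A a w e N := by
  induction M with
  | zero => simp
  | succ M ih =>
    rw [Finset.sum_range_succ, ← add_assoc]
    linarith [h.lyapunov_succ_add_half_le hγ hγ₁ hA ha (n := N + M) (by omega)]

lemma tsum_tail_le (h : EnergyErrorScheme γ A a w e) (hγ : 0 < γ) (hγ₁ : γ ≤ 1)
    (hA : 1 ≤ A) (ha : 0 < a) {N : ℕ} (hN : 1 ≤ N) :
    ∑' n, e (N + n) ≤ 2 * lyapunov γ A a w e N :=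
  Real.tsum_le_of_sum_range_le (fun n => h.e_nonneg _) fun M => by
    linarith [h.sum_range_add_two_mul_lyapunov_le hγ hγ₁ hA ha hN M,
      h.lyapunov_nonneg hγ.le ha.le (N + M)]

lemma summable (h : EnergyErrorScheme γ A a w e) (hγ : 0 < γ) (hγ₁ : γ ≤ 1) (hA : 1 ≤ A)
    (ha : 0 < a) : Summable e := by
  refine (summable_nat_add_iff 1).1
    (summable_of_sum_range_le (c := 2 * lyapunov γ A a w e 1) (fun n => h.e_nonneg _) fun M => ?_)
  have := h.sum_range_add_two_mul_lyapunov_le hγ hγ₁ hA ha le_rfl M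
  simp only [add_comm 1] at this
  linarith [h.lyapunov_nonneg hγ.le ha.le (M + 1)]

lemma tsum_le (h : EnergyErrorScheme γ A a w e) (hγ : 0 < γ) (hγ₁ : γ ≤ 1) (hA : 1 ≤ A)
    (ha : 0 < a) : ∑' n, e n ≤ e 0 + 2 * lyapunov γ A a w e 1 := by
  have := h.tsum_tail_le hγ hγ₁ hA ha le_rfl
  simp only [add_comm 1] at this
  rw [(h.summable hγ hγ₁ hA ha).tsum_eq_zero_add]
  linarith

lemma lyapunov_one_le (h : EnergyErrorScheme γ A a w e) (hγ : 0 < γ) (hA : 1 ≤ A)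
    (ha : 0 ≤ a) :
    lyapunov γ A a w e 1 ≤ A * e 0 + lyapCoeff γ A a * A ^ lyapExp γ * e 0 ^ γ := by
  have he₁ : e 1 ≤ A * e 0 := by
    rcases h.step 0 with ⟨-, he⟩ | ⟨-, he⟩ <;> rw [he]; nlinarith [h.e_nonneg 0]
  have hw₁ : w 1 ^ lyapExp γ ≤ A ^ lyapExp γ * e 0 ^ γ := calc
    w 1 ^ lyapExp γ ≤ (A * e 0 ^ (1 + γ)) ^ lyapExp γ :=
        Real.rpow_le_rpow (h.w_nonneg 1) (h.w_succ_le 0) (lyapExp_pos hγ).le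
    _ = A ^ lyapExp γ * e 0 ^ γ := by
        rw [Real.mul_rpow (by linarith) (Real.rpow_nonneg (h.e_nonneg 0) _),
          ← Real.rpow_mul (h.e_nonneg 0), one_add_mul_lyapExp hγ]
  unfold lyapunov
  nlinarith [mul_le_mul_of_nonneg_left hw₁ (lyapCoeff_nonneg (A := A) hγ.le ha)]

lemma lyapunov_one_le_errorBound (h : EnergyErrorScheme γ A a w e) (hγ : 0 < γ) (hA : 1 ≤ A)
    (ha : 0 ≤ a) : lyapunov γ A a w e 1 ≤ errorBound γ A a := by
  have he₀ := h.e_zero_le_one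
  have hγe : e 0 ^ γ ≤ 1 := Real.rpow_le_one (h.e_nonneg 0) he₀ hγ.le
  have hLA := mul_nonneg (lyapCoeff_nonneg (A := A) hγ.le ha)
    (Real.rpow_nonneg (by linarith : 0 ≤ A) (lyapExp γ))
  unfold errorBound
  nlinarith [h.lyapunov_one_le hγ hA ha, h.e_nonneg 0]

lemma e_le_errorBound (h : EnergyErrorScheme γ A a w e) (hγ : 0 < γ) (hγ₁ : γ ≤ 1)
    (hA : 1 ≤ A) (ha : 0 < a) (n : ℕ) : e n ≤ errorBound γ A a := by
  rcases Nat.eq_zero_or_pos n with rfl | hn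
  · linarith [h.e_zero_le_one, one_le_errorBound hγ.le hA ha.le]
  have hdesc : lyapunov γ A a w e n ≤ lyapunov γ A a w e 1 := by
    induction n, hn using Nat.le_induction with
    | base => rfl
    | succ n hn ih =>
      linarith [h.lyapunov_succ_add_half_le hγ hγ₁ hA ha hn, h.e_nonneg n]
  have he : e n ≤ lyapunov γ A a w e n :=
    le_add_of_nonneg_right
      (mul_nonneg (lyapCoeff_nonneg hγ.le ha.le) (Real.rpow_nonneg (h.w_nonneg n) _))
  linarith [h.lyapunov_one_le_errorBound hγ hA ha.le]

lemma lyapunov_le_mul_rpow (h : EnergyErrorScheme γ A a w e) (hγ : 0 < γ) (hγ₁ : γ ≤ 1)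
    (hA : 1 ≤ A) (ha : 0 < a) {n : ℕ} (hn : 1 ≤ n) :
    lyapunov γ A a w e n ≤ lyapunovConst γ A a * e n ^ γ := by
  have he := le_mul_rpow_of_le (h.e_nonneg n) (h.e_le_errorBound hγ hγ₁ hA ha n)
    (one_le_errorBound hγ.le hA ha.le) hγ.le hγ₁
  have hw : w n ^ lyapExp γ ≤ (4 * A) ^ lyapExp γ * e n ^ γ := calc
    w n ^ lyapExp γ ≤ (4 * A * e n ^ (1 + γ)) ^ lyapExp γ :=
        Real.rpow_le_rpow (h.w_nonneg n) (h.w_le hγ.le hγ₁ hA hn) (lyapExp_pos hγ).le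
    _ = (4 * A) ^ lyapExp γ * e n ^ γ := by
        rw [Real.mul_rpow (by linarith) (Real.rpow_nonneg (h.e_nonneg n) _),
          ← Real.rpow_mul (h.e_nonneg n), one_add_mul_lyapExp hγ]
  unfold lyapunov lyapunovConst
  nlinarith [mul_le_mul_of_nonneg_left hw (lyapCoeff_nonneg (A := A) hγ.le ha.le)]

lemma lyapunov_succ_le (h : EnergyErrorScheme γ A a w e) (hγ : 0 < γ) (hγ₁ : γ ≤ 1)
    (hA : 1 ≤ A) (ha : 0 < a) {n : ℕ} (hn : 1 ≤ n) :
    lyapunov γ A a w e (n + 1) ≤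
      lyapunov γ A a w e n - decayRate γ A a * lyapunov γ A a w e n ^ γ⁻¹ := by
  have hK₀ : 0 < lyapunovConst γ A a := by linarith [one_le_lyapunovConst hγ.le hA ha.le]
  have hK : 0 < lyapunovConst γ A a ^ γ⁻¹ := Real.rpow_pos_of_pos hK₀ _
  have hpow : lyapunov γ A a w e n ^ γ⁻¹ ≤ lyapunovConst γ A a ^ γ⁻¹ * e n := calc
    lyapunov γ A a w e n ^ γ⁻¹ ≤ (lyapunovConst γ A a * e n ^ γ) ^ γ⁻¹ :=
        Real.rpow_le_rpow (h.lyapunov_nonneg hγ.le ha.le n)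
          (h.lyapunov_le_mul_rpow hγ hγ₁ hA ha hn) (inv_nonneg.2 hγ.le)
    _ = lyapunovConst γ A a ^ γ⁻¹ * e n := by
        rw [Real.mul_rpow hK₀.le (Real.rpow_nonneg (h.e_nonneg n) _),
          ← Real.rpow_mul (h.e_nonneg n), mul_inv_cancel₀ hγ.ne', Real.rpow_one]
  have hrate : decayRate γ A a * lyapunov γ A a w e n ^ γ⁻¹ ≤ e n / 2 := calc
    decayRate γ A a * lyapunov γ A a w e n ^ γ⁻¹
        ≤ decayRate γ A a * (lyapunovConst γ A a ^ γ⁻¹ * e n) :=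
          mul_le_mul_of_nonneg_left hpow (decayRate_pos hγ hA ha.le).le
    _ = e n / 2 := by have := hK.ne'; unfold decayRate; field_simp
  linarith [h.lyapunov_succ_add_half_le hγ hγ₁ hA ha hn]

lemma tsum_le_errorSumModulus (h : EnergyErrorScheme γ A a w e) (hγ : 0 < γ) (hγ₁ : γ ≤ 1)
    (hA : 1 ≤ A) (ha : 0 < a) : ∑' n, e n ≤ errorSumModulus γ A a (e 0) := by
  unfold errorSumModulus
  linarith [h.tsum_le hγ hγ₁ hA ha, h.lyapunov_one_le hγ hA ha.le]

lemma tsum_tail_le_geometric (h : EnergyErrorScheme 1 A a w e) (hA : 1 ≤ A) (ha : 0 < a)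
    (N : ℕ) : ∑' n, e (N + n) ≤
      (1 + 2 * errorBound 1 A a) / (1 - decayRate 1 A a) * (1 - decayRate 1 A a) ^ N := by
  have hΦ₁ := h.lyapunov_one_le_errorBound one_pos hA ha.le
  set μ := decayRate 1 A a
  set X := errorBound 1 A a
  have hμ : 0 < μ := decayRate_pos one_pos hA ha.le
  have hμ₂ : μ ≤ 1 / 2 := decayRate_le_half one_pos hA ha.le
  have hX : 1 ≤ X := one_le_errorBound zero_le_one hA ha.le
  have hgeom : ∀ k, lyapunov 1 A a w e (k + 1) ≤ (1 - μ) ^ k * X := fun k => by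
    refine (le_geom (u := fun k => lyapunov 1 A a w e (k + 1)) (c := 1 - μ) (by linarith) k
      fun j _ => ?_).trans (mul_le_mul_of_nonneg_left hΦ₁ (pow_nonneg (by linarith) k))
    have := h.lyapunov_succ_le one_pos le_rfl hA ha (n := j + 1) (by omega)
    rw [inv_one, Real.rpow_one] at this
    linarith
  rcases N with _ | k
  · simp only [zero_add, pow_zero, mul_one]
    calc ∑' n, e n ≤ e 0 + 2 * lyapunov 1 A a w e 1 := h.tsum_le one_pos le_rfl hA ha
      _ ≤ 1 + 2 * X := by linarith [h.e_zero_le_one]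
      _ ≤ (1 + 2 * X) / (1 - μ) := le_div_self (by linarith) (by linarith) (by linarith)
  · calc ∑' n, e (k + 1 + n) ≤ 2 * lyapunov 1 A a w e (k + 1) :=
          h.tsum_tail_le one_pos le_rfl hA ha (by omega)
      _ ≤ 2 * ((1 - μ) ^ k * X) := by linarith [hgeom k]
      _ ≤ (1 + 2 * X) * (1 - μ) ^ k := by nlinarith [pow_nonneg (by linarith : 0 ≤ 1 - μ) k]
      _ = (1 + 2 * X) / (1 - μ) * (1 - μ) ^ (k + 1) := by
          field_simp [(by linarith : 1 - μ ≠ 0)]; ring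

end EnergyErrorScheme

lemma exists_tsum_tail_le_rpow {γ A a : ℝ} (hγ : 0 < γ) (hγ₁ : γ < 1) (hA : 1 ≤ A)
    (ha : 0 < a) :
    ∃ C > 0, ∀ w e : ℕ → ℝ, EnergyErrorScheme γ A a w e → ∀ N : ℕ, 1 ≤ N →
      ∑' n, e (N + n) ≤ C * (N : ℝ) ^ (-γ / (1 - γ)) := by
  set p := γ⁻¹ - 1
  have hp : 0 < p := by simp only [p, sub_pos]; exact one_lt_inv₀ hγ |>.2 hγ₁
  have hpμ : 0 < p * decayRate γ A a := mul_pos hp (decayRate_pos hγ hA ha.le)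
  set D := errorBound γ A a + (p * decayRate γ A a) ^ (-p⁻¹)
  have hD₀ : (p * decayRate γ A a) ^ (-p⁻¹) ≤ D :=
    le_add_of_nonneg_left (by linarith [one_le_errorBound hγ.le hA ha.le])
  have hD : 0 < D := (Real.rpow_pos_of_pos hpμ _).trans_le hD₀
  have hDμ : D ^ (-p) ≤ p * decayRate γ A a := calc
    D ^ (-p) ≤ ((p * decayRate γ A a) ^ (-p⁻¹)) ^ (-p) :=
        Real.rpow_le_rpow_of_nonpos (Real.rpow_pos_of_pos hpμ _) hD₀ (by linarith)
    _ = p * decayRate γ A a := by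
        rw [← Real.rpow_mul hpμ.le, neg_mul_neg, inv_mul_cancel₀ hp.ne', Real.rpow_one]
  have hexp : -p⁻¹ = -γ / (1 - γ) := by
    simp only [p]; field_simp
  refine ⟨2 * D, by positivity, fun w e h N hN => ?_⟩
  obtain ⟨k, rfl⟩ : ∃ k, N = k + 1 := ⟨N - 1, by omega⟩
  have hdecay := le_mul_rpow_neg_inv_of_le_sub_rpow hp hD hDμ
    (x := fun k => lyapunov γ A a w e (k + 1)) (fun _ => h.lyapunov_nonneg hγ.le ha.le _)
    ((h.lyapunov_one_le_errorBound hγ hA ha.le).trans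
      (by linarith [Real.rpow_pos_of_pos hpμ (-p⁻¹)]))
    (fun k => by
      simpa only [show 1 + p = γ⁻¹ by ring] using
        h.lyapunov_succ_le hγ hγ₁.le hA ha (n := k + 1) (by omega))
    k
  push_cast
  rw [← hexp]
  linarith [h.tsum_tail_le hγ hγ₁.le hA ha (N := k + 1) (by omega)]

/-- Lemma 5.1: decay of sequences satisfying the energy/error
dichotomy. -/
theorem sequences_lemma (γ A a : ℝ) (hγ : 0 < γ) (hγ1 : γ ≤ 1) (hA : 1 ≤ A)
    (ha : 0 < a) :
    ∃ (c C : ℝ) (σ : ℝ → ℝ), 0 < c ∧ c < 1 ∧ 0 < C ∧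
      Tendsto σ (𝓝[>] 0) (𝓝 0) ∧
      ∀ w e : ℕ → ℝ, (∀ n, 0 ≤ w n) → (∀ n, 0 ≤ e n) → e 0 ≤ 1 →
        (∀ n, w (n + 1) ≤ A * e n ^ (1 + γ)) →
        (∀ n, (w (n + 1) ≤ w n - a * e n ^ 2 ∧ e (n + 1) = A * e n) ∨
              (w (n + 1) ≤ w n ∧ e (n + 1) = e n / 2)) →
        Summable e ∧ (∑' n, e n) ≤ σ (e 0) ∧
        (γ = 1 → ∀ N : ℕ, (∑' n, e (N + n)) ≤ C * (1 - c) ^ N) ∧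
        (γ < 1 → ∀ N : ℕ, 1 ≤ N →
          (∑' n, e (N + n)) ≤ C * (N : ℝ) ^ (-γ / (1 - γ))) := by
  rcases hγ1.lt_or_eq with hlt | rfl
  · obtain ⟨C, hC, hdecay⟩ := exists_tsum_tail_le_rpow hγ hlt hA ha
    refine ⟨1 / 2, C, errorSumModulus γ A a, by norm_num, by norm_num, hC,
      tendsto_errorSumModulus hγ, fun w e hw he he₀ hwe hstep => ?_⟩
    have h : EnergyErrorScheme γ A a w e := ⟨hw, he, he₀, hwe, hstep⟩
    exact ⟨h.summable hγ hγ1 hA ha, h.tsum_le_errorSumModulus hγ hγ1 hA ha,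
      fun h1 => absurd h1 hlt.ne, fun _ => hdecay w e h⟩
  · have hμ₂ := decayRate_le_half one_pos hA ha.le
    refine ⟨decayRate 1 A a, (1 + 2 * errorBound 1 A a) / (1 - decayRate 1 A a),
      errorSumModulus 1 A a, decayRate_pos one_pos hA ha.le, by linarith,
      div_pos (by linarith [one_le_errorBound zero_le_one hA ha.le]) (by linarith),
      tendsto_errorSumModulus one_pos, fun w e hw he he₀ hwe hstep => ?_⟩
    have h : EnergyErrorScheme 1 A a w e := ⟨hw, he, he₀, hwe, hstep⟩
    exact ⟨h.summable one_pos le_rfl hA ha, h.tsum_le_errorSumModulus one_pos le_rfl hA ha,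
      fun _ => h.tsum_tail_le_geometric hA ha, fun h1 => absurd h1 (lt_irrefl 1)⟩

end TOP
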